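/- arXiv:cs/9912001 — 5 statements merged into one kernel-verified Lean document; each statement's English description precedes it below -/
import Mathlib

section
/- If m : ℕ → ℕ satisfies m(n) = o(2ⁿ) (i.e., m(n)/2ⁿ → 0), then the probability that a random Horn formula from Ω(n, m(n)) is satisfiable tends to 1 as n → ∞. -/
open scoped BigOperators

/-- A (possibly empty) Horn clause over variables `x₁,…,xₙ`: an optional positive
literal together with a finset of negated variables. -/
abbrev HClause (n : ℕ) := Option (Fin n) × Finset (Fin n)

/-- A Horn clause over `n` variables: a nonempty `HClause`. -/
abbrev HornClause (n : ℕ) := {C : HClause n // C ≠ ((none, ∅) : HClause n)}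

/-- An assignment satisfies a clause iff its positive literal is true or some
negated variable is false. -/
def clauseSat {n : ℕ} (σ : Fin n → Bool) (C : HClause n) : Prop :=
  (∃ i, C.1 = some i ∧ σ i = true) ∨ (∃ j ∈ C.2, σ j = false)

/-- A formula (an `m`-tuple of Horn clauses) is satisfiable. -/
def formulaSat {n m : ℕ} (Φ : Fin m → HornClause n) : Prop :=
  ∃ σ : Fin n → Bool, ∀ j, clauseSat σ (Φ j).1

/-- The probability that a random Horn formula with `n` variables and `m` clauses,
chosen independently and uniformly at random from all nonempty Horn clauses
(the model `Ω(n,m)`), is satisfiable. -/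
noncomputable def hornSatProb (n m : ℕ) : ℝ :=
  (Nat.card {Φ : Fin m → HornClause n // formulaSat Φ} : ℝ) /
    (Fintype.card (HornClause n) : ℝ) ^ m


/-!
A clause with a negated variable is satisfied by the all-`false` assignment, and all but `n` of
the `(n + 1) 2ⁿ - 1` Horn clauses have one. Hence a formula of `m` independent uniform clauses is
satisfiable with probability at least `(1 - 2⁻ⁿ) ^ m ≥ 1 - m / 2ⁿ` (Bernoulli's inequality),
which tends to `1` when `m = o(2ⁿ)`.
-/

open Filter Topology Finset

lemma card_hornClause (n : ℕ) : Fintype.card (HornClause n) = (n + 1) * 2 ^ n - 1 := by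
  simp [Fintype.card_subtype_compl, Fintype.card_finset]

def negClauses (n : ℕ) : Finset (HornClause n) := {C | C.1.2.Nonempty}

lemma card_negClauses (n : ℕ) : #(negClauses n) = (n + 1) * (2 ^ n - 1) := by
  have : (negClauses n).map (Function.Embedding.subtype _) = univ ×ˢ (univ.erase ∅) := by
    ext ⟨i, B⟩
    simp +contextual [negClauses, nonempty_iff_ne_empty]
  rw [← card_map, this, card_product, card_erase_of_mem (mem_univ _)]
  simp

lemma clauseSat_false_of_nonempty {n : ℕ} {C : HClause n} (h : C.2.Nonempty) :
    clauseSat (fun _ => false) C :=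
  Or.inr (h.imp fun _ hj => ⟨hj, rfl⟩)

lemma card_negClauses_pow_le (n k : ℕ) :
    #(negClauses n) ^ k ≤ Nat.card {Φ : Fin k → HornClause n // formulaSat Φ} := by
  classical
  rw [Nat.card_eq_fintype_card, Fintype.card_subtype, ← Fintype.card_piFinset_const]
  refine card_le_card fun Φ hΦ => mem_filter.2 ⟨mem_univ _, fun _ => false, fun j => ?_⟩
  exact clauseSat_false_of_nonempty (mem_filter.1 (Fintype.mem_piFinset.1 hΦ j)).2

lemma one_sub_one_div_two_pow_le_card_negClauses_div (n : ℕ) :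
    1 - 1 / 2 ^ n ≤ (#(negClauses n) : ℝ) / Fintype.card (HornClause n) := by
  rcases Nat.eq_zero_or_pos n with rfl | hn
  · simp
  have ht : (1 : ℝ) ≤ 2 ^ n := one_le_pow₀ one_le_two
  have hN : (Fintype.card (HornClause n) : ℝ) = (n + 1) * 2 ^ n - 1 := by
    rw [card_hornClause, Nat.cast_sub (Nat.one_le_iff_ne_zero.2 (by positivity))]
    push_cast
    ring
  have hG : (#(negClauses n) : ℝ) = (n + 1) * (2 ^ n - 1) := by
    rw [card_negClauses, Nat.cast_mul, Nat.cast_sub Nat.one_le_two_pow]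
    push_cast
    ring
  have hn1 : (1 : ℝ) ≤ n := by exact_mod_cast hn
  have hε : (1 / 2 ^ n : ℝ) ≤ 1 := div_le_one_of_le₀ ht (by positivity)
  rw [hN, hG, le_div_iff₀ (by nlinarith)]
  calc (1 - 1 / 2 ^ n) * ((n + 1) * 2 ^ n - 1 : ℝ)
      = (n + 1) * (2 ^ n - 1) - (1 - 1 / 2 ^ n) := by field_simp
    _ ≤ (n + 1) * (2 ^ n - 1) := by linarith

lemma hornSatProb_le_one (n k : ℕ) : hornSatProb n k ≤ 1 := by
  refine div_le_one_of_le₀ ?_ (by positivity)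
  have h := Finite.card_subtype_le (α := Fin k → HornClause n) formulaSat
  rw [Nat.card_eq_fintype_card (α := Fin k → _), Fintype.card_fun, Fintype.card_fin] at h
  exact_mod_cast h

lemma one_sub_div_two_pow_le_hornSatProb (n k : ℕ) : 1 - k / 2 ^ n ≤ hornSatProb n k := by
  have hε : (1 / 2 ^ n : ℝ) ≤ 1 := div_le_one_of_le₀ (one_le_pow₀ one_le_two) (by positivity)
  calc 1 - k / 2 ^ n = 1 + k * (-(1 / 2 ^ n) : ℝ) := by ring
    _ ≤ (1 - 1 / 2 ^ n) ^ k := by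
      simpa [sub_eq_add_neg] using one_add_mul_le_pow (a := -(1 / 2 ^ n : ℝ)) (by linarith) k
    _ ≤ ((#(negClauses n) : ℝ) / Fintype.card (HornClause n)) ^ k := by
      gcongr
      exact one_sub_one_div_two_pow_le_card_negClauses_div n
    _ ≤ hornSatProb n k := by
      rw [div_pow, hornSatProb]
      gcongr
      exact_mod_cast card_negClauses_pow_le n k

/-- If `m(n) = o(2ⁿ)`, then a random Horn formula from `Ω(n, m(n))` is
satisfiable with probability tending to `1`. -/
theorem horn_sat_subcritical (m : ℕ → ℕ)
    (hm : Filter.Tendsto (fun n : ℕ => (m n : ℝ) / 2 ^ n) Filter.atTop (nhds 0)) :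
    Filter.Tendsto (fun n : ℕ => hornSatProb n (m n)) Filter.atTop (nhds 1) := by
  have hlower : Tendsto (fun n => 1 - (m n : ℝ) / 2 ^ n) atTop (𝓝 1) := by
    simpa using tendsto_const_nhds.sub hm
  exact tendsto_of_tendsto_of_tendsto_of_le_of_le hlower tendsto_const_nhds
    (fun n => one_sub_div_two_pow_le_hornSatProb n (m n)) (fun n => hornSatProb_le_one n (m n))
end

section
/- If m : ℕ → ℕ satisfies m(n) = ω(2ⁿ) (i.e., m(n)/2ⁿ → ∞), then the probability that a random Horn formula from Ω(n, m(n)) is satisfiable tends to 0 as n → ∞. -/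
open scoped BigOperators

/-!
A satisfiable Horn formula `Φ` has a model `S` (the set of true variables) of minimal size,
and minimality forces every `i ∈ S` to be supported: some clause of `Φ` has head `i` and its
body inside `S`. Union-bound over `S` with `|S| = t`, over the `t` slots of the supporting
clauses and their `2ᵗ` possible bodies, while the remaining `M - t` clauses avoid the
`(n - t + 1) 2ᵗ - 1` clauses falsified by `S`. With `ω = M / 2ⁿ ≥ 2¹⁵` each `S` contributes at
most `n⁻ᵗ / ω`, so the satisfiability probability is at most `(1 + 1/n)ⁿ / ω ≤ e / ω`.
-/

namespace HornSat

open Finset Real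

variable {n M : ℕ}

lemma pow_le_exp_div_of_le {x : ℝ} {k : ℕ} (hk : 0 < k) (hx : 64 * (k : ℝ) ^ 4 ≤ x) :
    x ^ k ≤ exp (x / (4 * k)) := by
  have hk' : (0 : ℝ) < k := by exact_mod_cast hk
  have hx0 : 0 < x := lt_of_lt_of_le (by positivity) hx
  -- compare with the `2k`-th term of the exponential series
  calc x ^ k ≤ ((x / (8 * k ^ 2)) ^ 2) ^ k := by
        refine pow_le_pow_left₀ hx0.le ?_ k
        rw [div_pow, le_div_iff₀ (by positivity)]
        nlinarith
    _ = (x / (4 * k)) ^ (2 * k) / ((2 * k : ℕ) : ℝ) ^ (2 * k) := by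
        rw [← pow_mul, mul_comm 2 k, ← div_pow]
        congr 1
        push_cast
        field_simp
        ring
    _ ≤ (x / (4 * k)) ^ (2 * k) / (2 * k).factorial :=
        div_le_div_of_nonneg_left (by positivity) (by positivity)
          (by exact_mod_cast Nat.factorial_le_pow _)
    _ ≤ exp (x / (4 * k)) := pow_div_factorial_le_exp _ (by positivity) _

lemma pow_four_le_two_pow (k : ℕ) : k ^ 4 ≤ 2 ^ (k + 8) := by
  have hk : k ≤ 4 * 2 ^ (k / 4) := by
    have := @Nat.lt_two_pow_self (k / 4)
    omega
  calc k ^ 4 ≤ (4 * 2 ^ (k / 4)) ^ 4 := Nat.pow_le_pow_left hk 4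
    _ = 2 ^ (4 * (k / 4) + 8) := by ring
    _ ≤ 2 ^ (k + 8) := Nat.pow_le_pow_right (by norm_num) (by omega)

def assignmentOf (S : Finset (Fin n)) : Fin n → Bool := fun i => decide (i ∈ S)

lemma clauseSat_assignmentOf_iff {S : Finset (Fin n)} {C : HClause n} :
    clauseSat (assignmentOf S) C ↔ (∃ i ∈ S, C.1 = some i) ∨ ¬ C.2 ⊆ S := by
  simp [clauseSat, assignmentOf, Finset.not_subset, and_comm]

def IsModel (Φ : Fin M → HornClause n) (S : Finset (Fin n)) : Prop :=
  ∀ k, clauseSat (assignmentOf S) (Φ k).1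

def Supports (S : Finset (Fin n)) (i : Fin n) (C : HClause n) : Prop :=
  C.1 = some i ∧ C.2 ⊆ S

lemma exists_supports_of_not_isModel_erase {Φ : Fin M → HornClause n} {S : Finset (Fin n)}
    {i : Fin n} (hS : IsModel Φ S) (hi : ¬ IsModel Φ (S.erase i)) :
    ∃ k, Supports S i (Φ k).1 := by
  obtain ⟨k, hk⟩ := not_forall.mp hi
  simp only [clauseSat_assignmentOf_iff, not_or, not_not] at hk
  obtain ⟨hhead, hbody⟩ := hk
  refine ⟨k, ?_, hbody.trans (erase_subset i S)⟩
  rcases clauseSat_assignmentOf_iff.mp (hS k) with ⟨j, hjS, hj⟩ | hbody'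
  · obtain rfl : j = i := by
      by_contra hji
      exact hhead ⟨j, mem_erase.mpr ⟨hji, hjS⟩, hj⟩
    exact hj
  · exact absurd (hbody.trans (erase_subset i S)) hbody'

lemma exists_supported_model {Φ : Fin M → HornClause n} (h : formulaSat Φ) :
    ∃ S, IsModel Φ S ∧ ∀ i ∈ S, ∃ k, Supports S i (Φ k).1 := by
  classical
  obtain ⟨σ, hσ⟩ := h
  have hσS : assignmentOf (univ.filter (σ · = true)) = σ := by
    funext i; simp [assignmentOf]
  obtain ⟨S, hS, hmin⟩ := (univ.filter (IsModel Φ)).exists_min_image card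
    ⟨_, mem_filter.mpr ⟨mem_univ _, hσS ▸ hσ⟩⟩
  refine ⟨S, (mem_filter.mp hS).2, fun i hi => ?_⟩
  refine exists_supports_of_not_isModel_erase (mem_filter.mp hS).2 fun hmodel => ?_
  have := hmin _ (mem_filter.mpr ⟨mem_univ _, hmodel⟩)
  rw [card_erase_of_mem hi] at this
  have := card_pos.mpr ⟨i, hi⟩
  omega

instance (σ : Fin n → Bool) (C : HClause n) : Decidable (clauseSat σ C) :=
  inferInstanceAs (Decidable (_ ∨ _))

instance (S : Finset (Fin n)) (i : Fin n) (C : HClause n) : Decidable (Supports S i C) :=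
  inferInstanceAs (Decidable (_ ∧ _))

def satClauses (S : Finset (Fin n)) : Finset (HornClause n) :=
  univ.filter fun C => clauseSat (assignmentOf S) C.1

lemma card_filter_supports_le (S : Finset (Fin n)) (i : Fin n) :
    #(univ.filter fun C : HornClause n => Supports S i C.1) ≤ 2 ^ #S := by
  rw [← card_powerset]
  refine card_le_card_of_injOn (fun C => C.1.2) (fun C hC => ?_) fun C hC D hD hCD => ?_
  · rw [mem_coe, mem_filter_univ] at hC
    exact mem_coe.mpr (mem_powerset.mpr hC.2)
  · rw [mem_coe, mem_filter_univ] at hC hD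
    exact Subtype.ext (Prod.ext (hC.1.trans hD.1.symm) hCD)

def slotClauses (S : Finset (Fin n)) (j : S ↪ Fin M) (k : Fin M) : Finset (HornClause n) :=
  univ.filter fun C => clauseSat (assignmentOf S) C.1 ∧ ∀ i, j i = k → Supports S i C.1

lemma card_slotClauses_le (S : Finset (Fin n)) (j : S ↪ Fin M) (k : Fin M) :
    #(slotClauses S j k) ≤ if k ∈ univ.map j then 2 ^ #S else #(satClauses S) := by
  split_ifs with hk
  · obtain ⟨i, -, rfl⟩ := mem_map.mp hk
    exact (card_le_card fun C hC => by
      simp only [slotClauses, mem_filter, mem_univ, true_and] at hC ⊢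
      exact hC.2 i rfl).trans (card_filter_supports_le S i)
  · exact card_le_card (monotone_filter_right _ fun C _ hC => hC.1)

lemma card_piFinset_slotClauses_le (S : Finset (Fin n)) (j : S ↪ Fin M) :
    #(Fintype.piFinset (slotClauses S j)) ≤ (2 ^ #S) ^ #S * #(satClauses S) ^ (M - #S) := by
  have hmap : #(univ.filter (· ∈ univ.map j)) = #S := by
    rw [filter_mem_eq_inter, univ_inter, card_map, card_univ, Fintype.card_coe]
  have hcompl : #(univ.filter (· ∉ univ.map j)) = M - #S := by
    rw [filter_not, card_sdiff_of_subset (filter_subset _ _), hmap, card_univ, Fintype.card_fin]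
  rw [Fintype.card_piFinset]
  calc ∏ k, #(slotClauses S j k)
      ≤ ∏ k, if k ∈ univ.map j then 2 ^ #S else #(satClauses S) :=
        prod_le_prod' fun k _ => card_slotClauses_le S j k
    _ = _ := by rw [prod_ite, prod_const, prod_const, hmap, hcompl]

-- slots of the supporting clauses, the supporting clauses, then the remaining clauses
def modelCountBound (M : ℕ) (S : Finset (Fin n)) : ℕ :=
  M ^ #S * ((2 ^ #S) ^ #S * #(satClauses S) ^ (M - #S))

lemma card_formulaSat_le :
    Nat.card {Φ : Fin M → HornClause n // formulaSat Φ} ≤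
      ∑ S : Finset (Fin n), modelCountBound M S := by
  classical
  rw [Nat.card_eq_fintype_card, Fintype.card_subtype]
  have hcover : univ.filter (fun Φ : Fin M → HornClause n => formulaSat Φ) ⊆
      univ.biUnion fun S : Finset (Fin n) => univ.biUnion fun j : S ↪ Fin M =>
        Fintype.piFinset (slotClauses S j) := by
    intro Φ hΦ
    obtain ⟨S, hmodel, hsupp⟩ := exists_supported_model (mem_filter.mp hΦ).2
    choose slot hslot using hsupp
    have hinj : Function.Injective fun i : S => slot i i.2 := fun i i' h => by
      have h₁ := (hslot i i.2).1
      rw [show slot i i.2 = slot i' i'.2 from h, (hslot i' i'.2).1] at h₁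
      exact Subtype.ext (Option.some_injective _ h₁).symm
    simp only [mem_biUnion, mem_univ, true_and, Fintype.mem_piFinset]
    refine ⟨S, ⟨_, hinj⟩, fun k => ?_⟩
    simp only [slotClauses, mem_filter, mem_univ, true_and, Function.Embedding.coeFn_mk]
    exact ⟨hmodel k, fun i hik => hik ▸ hslot i i.2⟩
  refine (card_le_card hcover).trans (card_biUnion_le.trans (sum_le_sum fun S _ => ?_))
  calc #(univ.biUnion fun j : S ↪ Fin M => Fintype.piFinset (slotClauses S j))
      ≤ ∑ j : S ↪ Fin M, (2 ^ #S) ^ #S * #(satClauses S) ^ (M - #S) :=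
        card_biUnion_le.trans (sum_le_sum fun j _ => card_piFinset_slotClauses_le S j)
    _ ≤ modelCountBound M S := by
        rw [sum_const, card_univ, Fintype.card_embedding_eq, Fintype.card_coe,
          Fintype.card_fin, smul_eq_mul]
        exact Nat.mul_le_mul_right _ (Nat.descFactorial_le_pow _ _)

lemma card_hornClause : Fintype.card (HornClause n) = (n + 1) * 2 ^ n - 1 := by
  rw [Fintype.card_subtype_compl, Fintype.card_subtype_eq]
  simp [Fintype.card_prod, Fintype.card_option, Fintype.card_finset]

lemma card_compl_satClauses_add_one (S : Finset (Fin n)) :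
    (n - #S + 1) * 2 ^ #S ≤ #(satClauses S)ᶜ + 1 := by
  let heads : Finset (Option (Fin n)) := insert none (Sᶜ.map .some)
  have hheads : #heads = n - #S + 1 := by
    rw [card_insert_of_notMem (by simp), card_map, card_compl, Fintype.card_fin]
  have hunsat : heads ×ˢ S.powerset ⊆
      insert (none, ∅) ((satClauses S)ᶜ.map (.subtype _)) := by
    rintro ⟨h, B⟩ hC
    obtain ⟨hh, hB⟩ := mem_product.mp hC
    rw [mem_insert, mem_map]
    by_cases hC₀ : (h, B) = ((none, ∅) : HClause n)
    · exact .inl hC₀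
    refine .inr ⟨⟨(h, B), hC₀⟩, ?_, rfl⟩
    simp only [satClauses, mem_compl, mem_filter_univ, clauseSat_assignmentOf_iff, not_or,
      not_not, not_exists, not_and]
    refine ⟨fun i hi hhi => ?_, mem_powerset.mp hB⟩
    subst hhi
    simp [heads, hi] at hh
  calc (n - #S + 1) * 2 ^ #S = #(heads ×ˢ S.powerset) := by
        rw [card_product, hheads, card_powerset]
    _ ≤ _ := (card_le_card hunsat).trans (card_insert_le _ _)
    _ = #(satClauses S)ᶜ + 1 := by rw [card_map]

lemma two_pow_mul_le_card_compl_satClauses (hn : 0 < n) (S : Finset (Fin n)) :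
    (n + 1) * 2 ^ #S ≤ 2 * (#S + 1) * #(satClauses S)ᶜ := by
  have hcount := card_compl_satClauses_add_one S
  have ht := card_le_univ S
  rw [Fintype.card_fin] at ht
  generalize #S = t at *
  generalize #(satClauses S)ᶜ = u at *
  obtain ⟨d, rfl⟩ := Nat.exists_eq_add_of_le ht
  rw [Nat.add_sub_cancel_left] at hcount
  have htwo : 2 ≤ (d + 1) * 2 ^ t := by
    rcases Nat.eq_zero_or_pos t with rfl | htpos
    · omega
    · exact le_mul_of_one_le_of_le (by omega) (Nat.le_self_pow htpos.ne' 2)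
  nlinarith [Nat.zero_le (t * d * 2 ^ t)]

lemma card_hornClause_bounds :
    (n : ℝ) * 2 ^ n ≤ Fintype.card (HornClause n) ∧
      (Fintype.card (HornClause n) : ℝ) ≤ (n + 1) * 2 ^ n := by
  have h : Fintype.card (HornClause n) + 1 = (n + 1) * 2 ^ n := by
    rw [card_hornClause, Nat.sub_add_cancel (Nat.succ_le_of_lt (by positivity))]
  have hR : (Fintype.card (HornClause n) : ℝ) + 1 = (n + 1) * 2 ^ n := by exact_mod_cast h
  have : (1 : ℝ) ≤ 2 ^ n := one_le_pow₀ (by norm_num)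
  constructor <;> linarith

lemma satClauses_ratio_pow_le (hn : 0 < n) (S : Finset (Fin n)) (hM : 2 * #S ≤ M) :
    ((#(satClauses S) : ℝ) / Fintype.card (HornClause n)) ^ (M - #S) ≤
      exp (-((M : ℝ) * 2 ^ #S / 2 ^ n / (4 * (#S + 1)))) := by
  have hsum :
      ((#(satClauses S)ᶜ : ℕ) : ℝ) + #(satClauses S) = Fintype.card (HornClause n) := by
    exact_mod_cast card_compl_add_card (satClauses S)
  have hu : ((n : ℝ) + 1) * 2 ^ #S ≤ 2 * (#S + 1) * (#(satClauses S)ᶜ : ℕ) := by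
    exact_mod_cast two_pow_mul_le_card_compl_satClauses hn S
  have hMt : (M : ℝ) / 2 ≤ ((M - #S : ℕ) : ℝ) := by
    rw [Nat.cast_sub (by omega)]
    have : (2 * #S : ℝ) ≤ M := by exact_mod_cast hM
    linarith
  have hH : (n : ℝ) * 2 ^ n ≤ Fintype.card (HornClause n) ∧
      (Fintype.card (HornClause n) : ℝ) ≤ (n + 1) * 2 ^ n := card_hornClause_bounds
  set t := #S
  set u : ℝ := ((#(satClauses S)ᶜ : ℕ) : ℝ)
  set H : ℝ := ((Fintype.card (HornClause n) : ℕ) : ℝ)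
  have hHpos : 0 < H := lt_of_lt_of_le (by positivity) hH.1
  have hsat : (#(satClauses S) : ℝ) / H = 1 - u / H := by
    rw [eq_sub_iff_add_eq, ← add_div, div_eq_one_iff_eq hHpos.ne', add_comm, hsum]
  have huH : u / H ≤ 1 :=
    (div_le_one hHpos).mpr (by linarith [Nat.cast_nonneg (α := ℝ) #(satClauses S)])
  rw [hsat]
  calc (1 - u / H) ^ (M - t) ≤ exp (-(u / H)) ^ (M - t) :=
        pow_le_pow_left₀ (sub_nonneg.mpr huH) (one_sub_le_exp_neg _) _
    _ = exp (-(((M - t : ℕ) : ℝ) * u / H)) := by rw [← exp_nat_mul]; ring_nf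
    _ ≤ _ := by
      refine exp_le_exp.mpr (neg_le_neg ?_)
      calc (M : ℝ) * 2 ^ t / 2 ^ n / (4 * (t + 1))
          = (M / 2) * (((n : ℝ) + 1) * 2 ^ t / (2 * (t + 1))) / ((n + 1) * 2 ^ n) := by
            field_simp
            ring
        _ ≤ ((M - t : ℕ) : ℝ) * u / H := by
            gcongr
            · rw [div_le_iff₀ (by positivity)]; linarith
            · exact hH.2

lemma modelCountBound_div_le (hn : 0 < n) (hω : 2 ^ 15 ≤ (M : ℝ) / 2 ^ n)
    (S : Finset (Fin n)) :
    (modelCountBound M S : ℝ) / (Fintype.card (HornClause n) : ℝ) ^ M ≤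
      (n : ℝ)⁻¹ ^ #S / ((M : ℝ) / 2 ^ n) := by
  have hH : (n : ℝ) * 2 ^ n ≤ Fintype.card (HornClause n) ∧
      (Fintype.card (HornClause n) : ℝ) ≤ (n + 1) * 2 ^ n := card_hornClause_bounds
  have htn : #S < 2 ^ n := (card_le_univ S).trans_lt (by simpa using Nat.lt_two_pow_self)
  set t := #S
  set H : ℝ := ((Fintype.card (HornClause n) : ℕ) : ℝ)
  set ω : ℝ := (M : ℝ) / 2 ^ n
  set x : ℝ := (M : ℝ) * 2 ^ t / 2 ^ n
  have hHpos : 0 < H := lt_of_lt_of_le (by positivity) hH.1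
  have hxω : x = ω * 2 ^ t := by ring
  have hωpos : 0 < ω := lt_of_lt_of_le (by positivity) hω
  have hM : 2 * t ≤ M := by
    have h : (2 : ℝ) ^ 15 * 2 ^ n ≤ M := (le_div_iff₀ (by positivity)).mp hω
    have h' : (2 * t : ℝ) < 2 ^ 15 * 2 ^ n := by
      have : (t : ℝ) < 2 ^ n := by exact_mod_cast htn
      linarith [one_le_pow₀ (M₀ := ℝ) (n := n) (a := 2) (by norm_num)]
    exact_mod_cast (h'.trans_le h).le
  have hx : 64 * ((t + 1 : ℕ) : ℝ) ^ 4 ≤ x := by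
    have h' : ((t + 1 : ℕ) : ℝ) ^ 4 ≤ 2 ^ 9 * 2 ^ t := by
      exact_mod_cast (pow_four_le_two_pow (t + 1)).trans_eq (by ring)
    rw [hxω]
    nlinarith [pow_pos (two_pos (α := ℝ)) t]
  have hxpos : 0 < x := by rw [hxω]; positivity
  have hsplit : (modelCountBound M S : ℝ) / H ^ M =
      ((M : ℝ) * 2 ^ t / H) ^ t * ((#(satClauses S) : ℝ) / H) ^ (M - t) := by
    rw [div_pow, div_pow, mul_pow, ← pow_mul, div_mul_div_comm, ← pow_add,
      Nat.add_sub_cancel' (by omega)]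
    simp [modelCountBound, t, pow_mul, mul_assoc]
  have hratio : (M : ℝ) * 2 ^ t / H ≤ x / n := by
    rw [div_le_div_iff₀ hHpos (by positivity)]
    calc (M : ℝ) * 2 ^ t * n = x * (n * 2 ^ n) := by simp only [x]; field_simp
      _ ≤ x * H := by gcongr; exact hH.1
  have hexp : x ^ (t + 1) ≤ exp (x / (4 * ((t : ℝ) + 1))) := by
    simpa using pow_le_exp_div_of_le (Nat.succ_pos t) hx
  calc (modelCountBound M S : ℝ) / H ^ M
      ≤ (x / n) ^ t * exp (-(x / (4 * ((t : ℝ) + 1)))) := by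
        rw [hsplit]
        refine mul_le_mul (pow_le_pow_left₀ (by positivity) hratio t) ?_ (by positivity)
          (by positivity)
        exact satClauses_ratio_pow_le hn S hM
    _ ≤ (x / n) ^ t / x ^ (t + 1) := by
        rw [exp_neg, ← div_eq_mul_inv]
        exact div_le_div_of_nonneg_left (by positivity) (by positivity) hexp
    _ = (n : ℝ)⁻¹ ^ t / x := by
        rw [div_pow, pow_succ, inv_pow]
        field_simp
    _ ≤ (n : ℝ)⁻¹ ^ t / ω := by
        gcongr
        rw [hxω]
        exact le_mul_of_one_le_right hωpos.le (one_le_pow₀ (by norm_num))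

lemma hornSatProb_le (hn : 0 < n) (hω : 2 ^ 15 ≤ (M : ℝ) / 2 ^ n) :
    hornSatProb n M ≤ exp 1 / ((M : ℝ) / 2 ^ n) := by
  have hωpos : 0 < (M : ℝ) / 2 ^ n := lt_of_lt_of_le (by positivity) hω
  calc hornSatProb n M
      ≤ ∑ S : Finset (Fin n),
          (modelCountBound M S : ℝ) / Fintype.card (HornClause n) ^ M := by
        rw [hornSatProb, ← sum_div]
        gcongr
        exact_mod_cast card_formulaSat_le
    _ ≤ ∑ S : Finset (Fin n), (n : ℝ)⁻¹ ^ #S / ((M : ℝ) / 2 ^ n) :=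
        sum_le_sum fun S _ => modelCountBound_div_le hn hω S
    _ = ((n : ℝ)⁻¹ + 1) ^ n / ((M : ℝ) / 2 ^ n) := by
        have h := sum_pow_mul_eq_add_pow (n : ℝ)⁻¹ 1 (univ : Finset (Fin n))
        simp only [one_pow, mul_one, powerset_univ, card_univ, Fintype.card_fin] at h
        rw [← sum_div, h]
    _ ≤ exp 1 / ((M : ℝ) / 2 ^ n) := by
        gcongr
        calc ((n : ℝ)⁻¹ + 1) ^ n ≤ exp (n : ℝ)⁻¹ ^ n :=
              pow_le_pow_left₀ (by positivity) (add_one_le_exp _) n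
          _ = exp 1 := by rw [← exp_nat_mul, mul_inv_cancel₀ (by positivity)]

end HornSat

/-- If `m(n) = ω(2ⁿ)`, then a random Horn formula from `Ω(n, m(n))` is
satisfiable with probability tending to `0`. -/
theorem horn_sat_supercritical (m : ℕ → ℕ)
    (hm : Filter.Tendsto (fun n : ℕ => (m n : ℝ) / 2 ^ n) Filter.atTop Filter.atTop) :
    Filter.Tendsto (fun n : ℕ => hornSatProb n (m n)) Filter.atTop (nhds 0) := by
  have hbound : ∀ᶠ n in Filter.atTop,
      hornSatProb n (m n) ≤ Real.exp 1 / ((m n : ℝ) / 2 ^ n) := by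
    filter_upwards [hm.eventually_ge_atTop (2 ^ 15), Filter.eventually_gt_atTop 0] with n hω hn
    exact HornSat.hornSatProb_le hn hω
  exact squeeze_zero' (.of_forall fun n => by unfold hornSatProb; positivity) hbound
    (tendsto_const_nhds.div_atTop hm)
end

section
/- For every n ∈ ℕ and every p with 0 < p ≤ 1, the total variation distance between the binomial distribution B(n,p) and the Poisson distribution Po(np) satisfies d_TV(B(n,p), Po(np)) ≤ min{n·p², 3p/2}. -/
/-!
Stein–Chen method. For `λ > 0` and any `η`, `steinSol λ η` solves
`λ f(k+1) - k f(k) = η k`. Averaging this equation against `B(n,p)` with `η = 1_A - Po(λ)(A)`,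
`A = {k : Po(λ)(k) < B(n,p)(k)}`, turns the left side into `d_TV(B(n,p), Po(λ))`. Since `B(n,p)`
is `B(n-1,p)` convolved with a Bernoulli(p) law, for `λ = np` the right side is
`λ p E[f(W+2) - f(W+1)]` with `W ~ B(n-1,p)`.
Splitting `f` over the points `j ∈ A`, the solution for `{j}` is decreasing on `k ≥ 1` except for
the step from `j` to `j+1`, which is at most `(1 - e^{-λ})/λ`. Hence
`d_TV ≤ p (1 - e^{-λ}) ≤ min(n p², p)`.
-/

/-- The binomial probability mass function `B(n,p)(k) = C(n,k) pᵏ (1-p)^{n-k}`. -/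
noncomputable def binomPMF (n : ℕ) (p : ℝ) (k : ℕ) : ℝ :=
  (n.choose k : ℝ) * p ^ k * (1 - p) ^ (n - k)

/-- The Poisson probability mass function `Po(λ)(k) = e^{-λ} λᵏ / k!`. -/
noncomputable def poissonPMF (lam : ℝ) (k : ℕ) : ℝ :=
  Real.exp (-lam) * lam ^ k / (Nat.factorial k : ℝ)

open Finset
open scoped Nat

noncomputable def tvDist (P Q : ℕ → ℝ) : ℝ := (1 / 2) * ∑' k, |P k - Q k|

theorem tvDist_eq_sum_filter {P Q : ℕ → ℝ} (s : Finset ℕ) (hP : ∀ k ∉ s, P k = 0)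
    (hQ : HasSum Q (∑ k ∈ s, P k)) (hQ0 : ∀ k, 0 ≤ Q k) :
    tvDist P Q = ∑ k ∈ s with Q k < P k, (P k - Q k) := by
  set d : ℕ → ℝ := fun k ↦ if Q k < P k then P k - Q k else 0
  have hd : HasSum d (∑ k ∈ s with Q k < P k, (P k - Q k)) := by
    rw [sum_filter]
    refine hasSum_sum_of_ne_finset_zero fun k hk ↦ ?_
    simp only [d, hP k hk, if_neg (not_lt.2 (hQ0 k))]
  have habs : ∀ k, |P k - Q k| = 2 * d k - (P k - Q k) := by
    intro k
    simp only [d]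
    split_ifs with h
    · rw [abs_of_pos (sub_pos.2 h)]; ring
    · rw [abs_of_nonpos (sub_nonpos.2 (not_lt.1 h))]; ring
  have hsum := (hd.mul_left 2).sub ((hasSum_sum_of_ne_finset_zero hP).sub hQ)
  rw [sub_self, sub_zero, ← funext habs] at hsum
  rw [tvDist, hsum.tsum_eq]
  ring

section ExpSeries

noncomputable def expPartialSum (lam : ℝ) (m : ℕ) : ℝ := ∑ i ∈ range m, lam ^ i / i !

variable {lam : ℝ}

theorem hasSum_pow_div_factorial (x : ℝ) : HasSum (fun i ↦ x ^ i / i !) (Real.exp x) := by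
  rw [Real.exp_eq_exp_ℝ]
  exact NormedSpace.expSeries_div_hasSum_exp x

theorem hasSum_pow_add_div_factorial (lam : ℝ) (m : ℕ) :
    HasSum (fun i ↦ lam ^ (i + m) / (i + m)!) (Real.exp lam - expPartialSum lam m) :=
  (hasSum_nat_add_iff' m).2 (hasSum_pow_div_factorial lam)

theorem mul_pow_div_factorial (lam : ℝ) (i : ℕ) :
    lam * (lam ^ i / i !) = (i + 1) * (lam ^ (i + 1) / (i + 1)!) := by
  rw [Nat.factorial_succ, pow_succ]
  push_cast
  field_simp

theorem mul_expPartialSum_le (hl : 0 ≤ lam) (j : ℕ) :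
    lam * expPartialSum lam j ≤ j * (expPartialSum lam (j + 1) - 1) := by
  have hshift : expPartialSum lam (j + 1) - 1 = ∑ i ∈ range j, lam ^ (i + 1) / (i + 1)! := by
    simp [expPartialSum, sum_range_succ']
  rw [hshift, expPartialSum, mul_sum, mul_sum]
  refine sum_le_sum fun i hi ↦ ?_
  rw [mul_pow_div_factorial]
  have hij : (i : ℝ) + 1 ≤ j := by exact_mod_cast mem_range.1 hi
  exact mul_le_mul_of_nonneg_right hij (by positivity)

theorem mul_exp_sub_expPartialSum_succ_le (hl : 0 ≤ lam) (m : ℕ) :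
    m * (Real.exp lam - expPartialSum lam (m + 1)) ≤
      lam * (Real.exp lam - expPartialSum lam m) := by
  refine hasSum_le (fun i ↦ ?_) ((hasSum_pow_add_div_factorial lam (m + 1)).mul_left (m : ℝ))
    ((hasSum_pow_add_div_factorial lam m).mul_left lam)
  rw [mul_pow_div_factorial, ← add_assoc]
  have him : (m : ℝ) ≤ (i + m : ℕ) + 1 := by
    push_cast
    linarith [(i.cast_nonneg : (0 : ℝ) ≤ i)]
  exact mul_le_mul_of_nonneg_right him (by positivity)

end ExpSeries

theorem poissonPMF_nonneg {lam : ℝ} (hl : 0 ≤ lam) (k : ℕ) : 0 ≤ poissonPMF lam k := by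
  unfold poissonPMF
  positivity

theorem hasSum_poissonPMF (lam : ℝ) : HasSum (poissonPMF lam) 1 := by
  have h := (hasSum_pow_div_factorial lam).mul_left (Real.exp (-lam))
  rwa [← Real.exp_add, neg_add_cancel, Real.exp_zero,
    ← funext fun k ↦ mul_div_assoc _ _ _] at h

section Stein

variable {lam : ℝ}

-- `f 0` is arbitrary: it enters the Stein equation only with the factor `k = 0`.
noncomputable def steinSol (lam : ℝ) (η : ℕ → ℝ) : ℕ → ℝ
  | 0 => 0
  | m + 1 => m ! / lam ^ (m + 1) * ∑ i ∈ range (m + 1), lam ^ i / i ! * η i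

theorem steinSol_spec (hl : lam ≠ 0) (η : ℕ → ℝ) (k : ℕ) :
    lam * steinSol lam η (k + 1) - k * steinSol lam η k = η k := by
  cases k with
  | zero => simp [steinSol, field]
  | succ m =>
    simp only [steinSol, sum_range_succ _ (m + 1), Nat.factorial_succ, pow_succ]
    push_cast
    field_simp
    ring

noncomputable def steinSolPoint (lam : ℝ) (j : ℕ) : ℕ → ℝ :=
  steinSol lam fun i ↦ (if i = j then 1 else 0) - poissonPMF lam j

theorem steinSolPoint_succ (lam : ℝ) (j m : ℕ) :
    steinSolPoint lam j (m + 1) = m ! / lam ^ (m + 1) *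
      ((if j ≤ m then lam ^ j / j ! else 0) - poissonPMF lam j * expPartialSum lam (m + 1)) := by
  simp only [steinSolPoint, steinSol, mul_sub, mul_ite, mul_one, mul_zero, sum_sub_distrib,
    sum_ite_eq', mem_range, Nat.lt_succ_iff, expPartialSum, sum_mul, mul_comm (poissonPMF lam j)]

theorem steinSolPoint_succ_of_le (hl : lam ≠ 0) {j m : ℕ} (h : j ≤ m) :
    steinSolPoint lam j (m + 1) = m ! / lam ^ (m + 1) *
      (poissonPMF lam j * (Real.exp lam - expPartialSum lam (m + 1))) := by
  rw [steinSolPoint_succ, if_pos h, poissonPMF, Real.exp_neg]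
  field_simp

theorem steinSolPoint_succ_succ_le (hl : 0 < lam) {j m : ℕ} (hj : m + 1 ≠ j) :
    steinSolPoint lam j (m + 2) ≤ steinSolPoint lam j (m + 1) := by
  have hq := poissonPMF_nonneg hl.le j
  have hscale : ∀ x y : ℝ, (m + 1) * x ≤ lam * y →
      (m + 1)! / lam ^ (m + 2) * x ≤ m ! / lam ^ (m + 1) * y := by
    intro x y hxy
    have hx : (m + 1)! / lam ^ (m + 2) * x = m ! / lam ^ (m + 2) * ((m + 1) * x) := by
      rw [Nat.factorial_succ]; push_cast; ring
    have hy : m ! / lam ^ (m + 1) * y = m ! / lam ^ (m + 2) * (lam * y) := by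
      field_simp; ring
    rw [hx, hy]
    exact mul_le_mul_of_nonneg_left hxy (by positivity)
  rcases hj.lt_or_gt with hlt | hgt
  · rw [steinSolPoint_succ, steinSolPoint_succ, if_neg (by omega), if_neg (by omega)]
    refine hscale _ _ ?_
    have key := mul_expPartialSum_le hl.le (m + 1)
    push_cast at key
    nlinarith
  · rw [steinSolPoint_succ_of_le hl.ne' (by omega : j ≤ m + 1),
      steinSolPoint_succ_of_le hl.ne' (by omega : j ≤ m)]
    refine hscale _ _ ?_
    have key := mul_exp_sub_expPartialSum_succ_le hl.le (m + 1)
    push_cast at key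
    nlinarith

theorem steinSolPoint_succ_sub_le (hl : 0 < lam) (j : ℕ) :
    steinSolPoint lam (j + 1) (j + 2) - steinSolPoint lam (j + 1) (j + 1) ≤
      (1 - Real.exp (-lam)) / lam := by
  set e := Real.exp (-lam)
  have he : 0 ≤ e := (Real.exp_pos _).le
  have hA : steinSolPoint lam (j + 1) (j + 2) = (1 - e * expPartialSum lam (j + 2)) / lam := by
    rw [steinSolPoint_succ, if_pos le_rfl, poissonPMF]
    field_simp
    ring
  have hB : steinSolPoint lam (j + 1) (j + 1) = -(e * expPartialSum lam (j + 1) / (j + 1)) := by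
    rw [steinSolPoint_succ, if_neg (by omega), poissonPMF, Nat.factorial_succ, pow_succ]
    push_cast
    field_simp
    ring
  have key := mul_expPartialSum_le hl.le (j + 1)
  push_cast at key
  have hkey :
      e * expPartialSum lam (j + 1) / (j + 1) ≤ e * (expPartialSum lam (j + 2) - 1) / lam := by
    rw [div_le_div_iff₀ (by positivity) hl]
    nlinarith [mul_le_mul_of_nonneg_left key he]
  have hsplit : (1 - e) / lam =
      (1 - e * expPartialSum lam (j + 2)) / lam + e * (expPartialSum lam (j + 2) - 1) / lam := by
    ring
  rw [hA, hB, hsplit]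
  linarith

theorem sum_steinSolPoint_sub_le (hl : 0 < lam) (A : Finset ℕ) (m : ℕ) :
    ∑ j ∈ A, (steinSolPoint lam j (m + 2) - steinSolPoint lam j (m + 1)) ≤
      (1 - Real.exp (-lam)) / lam := by
  have hC : 0 ≤ (1 - Real.exp (-lam)) / lam :=
    div_nonneg (sub_nonneg.2 (Real.exp_le_one_iff.2 (neg_nonpos.2 hl.le))) hl.le
  calc ∑ j ∈ A, (steinSolPoint lam j (m + 2) - steinSolPoint lam j (m + 1))
      ≤ ∑ j ∈ A, if j = m + 1 then (1 - Real.exp (-lam)) / lam else 0 := by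
        refine sum_le_sum fun j _ ↦ ?_
        split_ifs with h
        · subst h
          exact steinSolPoint_succ_sub_le hl m
        · exact sub_nonpos.2 (steinSolPoint_succ_succ_le hl (Ne.symm h))
    _ ≤ (1 - Real.exp (-lam)) / lam := by
        rw [sum_ite_eq']
        split_ifs <;> simp [hC]

end Stein

section Binomial

theorem binomPMF_eq_zero_of_lt (p : ℝ) {n k : ℕ} (h : n < k) : binomPMF n p k = 0 := by
  simp [binomPMF, Nat.choose_eq_zero_of_lt h]

theorem binomPMF_nonneg {p : ℝ} (hp : 0 ≤ p) (hp1 : p ≤ 1) (n k : ℕ) :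
    0 ≤ binomPMF n p k := by
  have : 0 ≤ 1 - p := sub_nonneg.2 hp1
  unfold binomPMF
  positivity

theorem sum_range_binomPMF (p : ℝ) (n : ℕ) : ∑ k ∈ range (n + 1), binomPMF n p k = 1 := by
  have h := (add_pow p (1 - p) n).symm
  rw [add_sub_cancel, one_pow] at h
  rw [← h]
  exact sum_congr rfl fun k _ ↦ by rw [binomPMF]; ring

theorem binomPMF_succ_zero (p : ℝ) (n : ℕ) :
    binomPMF (n + 1) p 0 = (1 - p) * binomPMF n p 0 := by
  simp [binomPMF, pow_succ, mul_comm]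

theorem binomPMF_succ_succ (p : ℝ) (n k : ℕ) :
    binomPMF (n + 1) p (k + 1) = (1 - p) * binomPMF n p (k + 1) + p * binomPMF n p k := by
  rcases lt_or_ge n (k + 1) with h | h
  · rw [binomPMF_eq_zero_of_lt p h, binomPMF, binomPMF, Nat.choose_succ_succ,
      Nat.choose_eq_zero_of_lt h, Nat.succ_sub_succ]
    push_cast
    ring
  · rw [binomPMF, binomPMF, binomPMF, Nat.choose_succ_succ, Nat.succ_sub_succ,
      show n - k = n - (k + 1) + 1 by omega]
    push_cast
    ring

theorem succ_mul_binomPMF_succ (p : ℝ) (n k : ℕ) :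
    (k + 1) * binomPMF (n + 1) p (k + 1) = (n + 1) * p * binomPMF n p k := by
  have h : ((n + 1 : ℕ) : ℝ) * n.choose k = (n + 1).choose (k + 1) * (k + 1 : ℕ) := by
    exact_mod_cast Nat.add_one_mul_choose_eq n k
  push_cast at h
  rw [binomPMF, binomPMF, Nat.succ_sub_succ, pow_succ]
  linear_combination (-(p ^ k * p * (1 - p) ^ (n - k))) * h

theorem sum_binomPMF_succ_mul (p : ℝ) (n : ℕ) (g : ℕ → ℝ) :
    ∑ k ∈ range (n + 2), binomPMF (n + 1) p k * g k =
      ∑ k ∈ range (n + 1), binomPMF n p k * ((1 - p) * g k + p * g (k + 1)) := by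
  have hshift := sum_range_succ' (fun k ↦ binomPMF n p k * g k) (n + 1)
  rw [sum_range_succ, binomPMF_eq_zero_of_lt p (Nat.lt_succ_self n), zero_mul, add_zero] at hshift
  rw [sum_range_succ']
  simp only [binomPMF_succ_succ, binomPMF_succ_zero, add_mul, mul_add, sum_add_distrib,
    mul_assoc, ← mul_sum, mul_left_comm _ p, mul_left_comm _ (1 - p)]
  linear_combination (p - 1) * hshift

theorem sum_binomPMF_succ_natCast_mul (p : ℝ) (n : ℕ) (f : ℕ → ℝ) :
    ∑ k ∈ range (n + 2), binomPMF (n + 1) p k * (k * f k) =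
      (n + 1) * p * ∑ k ∈ range (n + 1), binomPMF n p k * f (k + 1) := by
  rw [sum_range_succ', mul_sum]
  simp only [Nat.cast_zero, zero_mul, mul_zero, add_zero]
  refine sum_congr rfl fun k _ ↦ ?_
  push_cast
  linear_combination f (k + 1) * succ_mul_binomPMF_succ p n k

theorem sum_binomPMF_mul_stein (p : ℝ) (n : ℕ) (f : ℕ → ℝ) :
    ∑ k ∈ range (n + 2), binomPMF (n + 1) p k * ((n + 1) * p * f (k + 1) - k * f k) =
      (n + 1) * p * p * ∑ k ∈ range (n + 1), binomPMF n p k * (f (k + 2) - f (k + 1)) := by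
  have h1 := sum_binomPMF_succ_mul p n (fun k ↦ f (k + 1))
  have h2 := sum_binomPMF_succ_natCast_mul p n f
  simp only [mul_sub, sum_sub_distrib, mul_left_comm _ ((n + 1 : ℝ) * p), ← mul_sum]
  rw [h1, h2]
  simp only [mul_add, sum_add_distrib, mul_left_comm _ (1 - p), mul_left_comm _ p, ← mul_sum]
  ring

theorem sum_binomPMF_mul_indicator_sub (p : ℝ) (n j : ℕ) (c : ℝ) :
    ∑ k ∈ range (n + 1), binomPMF n p k * ((if k = j then 1 else 0) - c) =
      binomPMF n p j - c := by
  simp only [mul_sub, mul_ite, mul_one, mul_zero, sum_sub_distrib, sum_ite_eq', ← sum_mul,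
    sum_range_binomPMF, one_mul, mem_range]
  split_ifs with h
  · rfl
  · rw [binomPMF_eq_zero_of_lt p (by omega)]

end Binomial

theorem binomPMF_sub_poissonPMF_eq {p : ℝ} (hp : p ≠ 0) (n j : ℕ) :
    binomPMF (n + 1) p j - poissonPMF ((n + 1) * p) j = (n + 1) * p * p *
      ∑ k ∈ range (n + 1), binomPMF n p k *
        (steinSolPoint ((n + 1) * p) j (k + 2) - steinSolPoint ((n + 1) * p) j (k + 1)) := by
  have hl : (n + 1) * p ≠ 0 := mul_ne_zero (by positivity) hp
  rw [← sum_binomPMF_mul_stein, ← sum_binomPMF_mul_indicator_sub p (n + 1) j]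
  refine sum_congr rfl fun k _ ↦ ?_
  rw [steinSolPoint, steinSol_spec hl]

theorem tvDist_binomPMF_poissonPMF_le (n : ℕ) {p : ℝ} (hp : 0 < p) (hp1 : p ≤ 1) :
    tvDist (binomPMF n p) (poissonPMF (n * p)) ≤ p * (1 - Real.exp (-(n * p))) := by
  rcases n with _ | m
  · have hpoint : binomPMF 0 p = poissonPMF ((0 : ℕ) * p) :=
      funext fun k ↦ by cases k <;> simp [binomPMF, poissonPMF]
    simp [tvDist, hpoint]
  push_cast
  set lam := ((m : ℝ) + 1) * p
  have hl : 0 < lam := by positivity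
  have hsum : HasSum (poissonPMF lam) (∑ k ∈ range (m + 2), binomPMF (m + 1) p k) := by
    convert hasSum_poissonPMF lam using 1
    exact sum_range_binomPMF p (m + 1)
  rw [tvDist_eq_sum_filter (range (m + 2))
    (fun k hk ↦ binomPMF_eq_zero_of_lt p (by simp at hk; omega)) hsum (poissonPMF_nonneg hl.le)]
  calc ∑ j ∈ range (m + 2) with poissonPMF lam j < binomPMF (m + 1) p j,
        (binomPMF (m + 1) p j - poissonPMF lam j)
      = lam * p * ∑ k ∈ range (m + 1), binomPMF m p k *
          ∑ j ∈ range (m + 2) with poissonPMF lam j < binomPMF (m + 1) p j,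
            (steinSolPoint lam j (k + 2) - steinSolPoint lam j (k + 1)) := by
        simp only [binomPMF_sub_poissonPMF_eq hp.ne', mul_sum, lam]
        exact sum_comm
    _ ≤ lam * p * ∑ k ∈ range (m + 1), binomPMF m p k * ((1 - Real.exp (-lam)) / lam) := by
        gcongr with k
        · exact binomPMF_nonneg hp.le hp1 m k
        · exact sum_steinSolPoint_sub_le hl _ k
    _ = p * (1 - Real.exp (-lam)) := by
        rw [← sum_mul, sum_range_binomPMF]
        field_simp

/-- For every `n` and `0 < p ≤ 1`, the total variation distance between
`B(n,p)` and `Po(np)` is at most `min(n p², 3p/2)`. -/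
theorem tv_binomial_poisson (n : ℕ) (p : ℝ) (hp : 0 < p) (hp1 : p ≤ 1) :
    (1 / 2) * ∑' k : ℕ, |binomPMF n p k - poissonPMF (n * p) k| ≤
      min ((n : ℝ) * p ^ 2) (3 * p / 2) := by
  have hbound : (1 / 2) * ∑' k : ℕ, |binomPMF n p k - poissonPMF (n * p) k| ≤
      p * (1 - Real.exp (-(n * p))) := tvDist_binomPMF_poissonPMF_le n hp hp1
  refine le_min ?_ ?_
  · calc _ ≤ p * (1 - Real.exp (-(n * p))) := hbound
      _ ≤ p * (n * p) := by gcongr; linarith [Real.add_one_le_exp (-(n * p))]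
      _ = n * p ^ 2 := by ring
  · calc _ ≤ p * (1 - Real.exp (-(n * p))) := hbound
      _ ≤ p * 1 := by gcongr; linarith [Real.exp_pos (-(n * p))]
      _ ≤ 3 * p / 2 := by linarith
end

section
/- Let c > 0 be constant and let Φ ∈ Ω(n, ⌊c·2ⁿ⌋) be a random Horn formula. Then the probability that there exists a variable i such that both the positive unit clause (some i, ∅) and the negative unit clause (none, {i}) occur among the clauses of Φ tends to 0 as n → ∞. (Equivalently, with probability 1 − o(1), PUR does not reject at its first stage.) -/
open scoped BigOperators

/-!
Union bound: a formula with contradictory unit clauses has, for some variable `i` and some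
positions `j ≠ j'`, the clause `(some i, ∅)` at `j` and `(none, {i})` at `j'`. Each of these
`n m²` events has probability `N⁻²`, where `N ≥ n 2ⁿ` is the number of Horn clauses, so for
`m ≤ c 2ⁿ` the probability is at most `n m² / N² ≤ c² / n`.
-/

open Finset Filter

theorem card_filter_apply_eq_and_apply_eq_mul {ι α : Type*} [Fintype ι] [DecidableEq ι]
    [Fintype α] [DecidableEq α] {j j' : ι} (hj : j ≠ j') (x y : α) :
    #{f : ι → α | f j = x ∧ f j' = y} * Fintype.card α ^ 2 = Fintype.card α ^ Fintype.card ι := by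
  set t : ι → Finset α := fun k => if k = j then {x} else if k = j' then {y} else univ
  have hfilter : ({f : ι → α | f j = x ∧ f j' = y} : Finset (ι → α)) = Fintype.piFinset t := by
    ext f
    simp only [mem_filter, mem_univ, true_and, Fintype.mem_piFinset, t]
    refine ⟨fun ⟨hx, hy⟩ k => ?_, fun h => ⟨by simpa using h j, by simpa [hj.symm] using h j'⟩⟩
    split_ifs with hkj hkj' <;> simp_all
  have hj'mem : j' ∈ univ.erase j := mem_erase.2 ⟨hj.symm, mem_univ _⟩
  have hsplit : ∀ g : ι → ℕ,
      ∏ k, g k = g j * (g j' * ∏ k ∈ (univ.erase j).erase j', g k) := fun g => by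
    rw [mul_prod_erase _ _ hj'mem, mul_prod_erase _ _ (mem_univ j)]
  have hrest : ∀ k ∈ (univ.erase j).erase j', #(t k) = Fintype.card α := by
    intro k hk
    simp_all [t]
  have hpow : Fintype.card α ^ Fintype.card ι = ∏ _k : ι, Fintype.card α := by simp
  rw [hfilter, Fintype.card_piFinset, hpow, hsplit, hsplit, prod_congr rfl hrest]
  simp [t, hj.symm]
  ring

theorem card_filter_exists_apply_eq_pair_mul_le {κ ι α : Type*} [Fintype κ] [Fintype ι]
    [DecidableEq ι] [Fintype α] [DecidableEq α] (a b : κ → α) (hab : ∀ i, a i ≠ b i) :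
    #{f : ι → α | ∃ i, (∃ j, f j = a i) ∧ ∃ j, f j = b i} * Fintype.card α ^ 2
      ≤ Fintype.card κ * Fintype.card ι ^ 2 * Fintype.card α ^ Fintype.card ι := by
  set S : κ × ι × ι → Finset (ι → α) := fun p => {f | f p.2.1 = a p.1 ∧ f p.2.2 = b p.1}
  have hS : ∀ p, #(S p) * Fintype.card α ^ 2 ≤ Fintype.card α ^ Fintype.card ι := by
    rintro ⟨i, j, j'⟩
    obtain rfl | hj := eq_or_ne j j'
    · have hempty : S (i, j, j) = ∅ :=
        filter_eq_empty_iff.2 fun f _ ⟨ha, hb⟩ => hab i (ha ▸ hb)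
      simp [hempty]
    · exact (card_filter_apply_eq_and_apply_eq_mul hj _ _).le
  have hsub : ({f : ι → α | ∃ i, (∃ j, f j = a i) ∧ ∃ j, f j = b i} : Finset (ι → α))
      ⊆ univ.biUnion S := by
    intro f hf
    obtain ⟨i, ⟨j, hj⟩, ⟨j', hj'⟩⟩ := (mem_filter.1 hf).2
    exact mem_biUnion.2 ⟨(i, j, j'), mem_univ _, mem_filter.2 ⟨mem_univ _, hj, hj'⟩⟩
  calc _ ≤ #(univ.biUnion S) * Fintype.card α ^ 2 := by gcongr
    _ ≤ ∑ p, #(S p) * Fintype.card α ^ 2 := by rw [← sum_mul]; gcongr; exact card_biUnion_le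
    _ ≤ ∑ _p : κ × ι × ι, Fintype.card α ^ Fintype.card ι := sum_le_sum fun p _ => hS p
    _ = _ := by simp [sq, mul_assoc]

def HasContradictoryUnits {n m : ℕ} (Φ : Fin m → HornClause n) : Prop :=
  ∃ i : Fin n,
    (∃ j, (Φ j).1 = ((some i, ∅) : HClause n)) ∧ (∃ j, (Φ j).1 = ((none, {i}) : HClause n))

namespace HornClause

def posUnit {n : ℕ} (i : Fin n) : HornClause n := ⟨(some i, ∅), by simp⟩

def negUnit {n : ℕ} (i : Fin n) : HornClause n := ⟨(none, {i}), by simp⟩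

theorem posUnit_ne_negUnit {n : ℕ} (i : Fin n) : posUnit i ≠ negUnit i := by
  simp [posUnit, negUnit]

theorem card_eq (n : ℕ) : Fintype.card (HornClause n) = (n + 1) * 2 ^ n - 1 := by
  rw [Fintype.card_subtype_compl]
  simp [Fintype.card_prod]

theorem mul_two_pow_le_card (n : ℕ) : n * 2 ^ n ≤ Fintype.card (HornClause n) := by
  have : 1 ≤ 2 ^ n := Nat.one_le_two_pow
  rw [card_eq, add_one_mul]
  omega

end HornClause

theorem card_hasContradictoryUnits_mul_le (n m : ℕ) :
    Nat.card {Φ : Fin m → HornClause n // HasContradictoryUnits Φ} *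
        Fintype.card (HornClause n) ^ 2
      ≤ n * m ^ 2 * Fintype.card (HornClause n) ^ m := by
  classical
  have key := card_filter_exists_apply_eq_pair_mul_le (ι := Fin m)
    (HornClause.posUnit (n := n)) HornClause.negUnit HornClause.posUnit_ne_negUnit
  simp only [Fintype.card_fin] at key
  rw [Nat.card_eq_fintype_card, Fintype.card_subtype]
  convert key using 4
  simp [HasContradictoryUnits, Subtype.ext_iff, HornClause.posUnit, HornClause.negUnit]

theorem card_hasContradictoryUnits_div_le {c : ℝ} {n m : ℕ} (hn : 0 < n)
    (hm : (m : ℝ) ≤ c * 2 ^ n) :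
    (Nat.card {Φ : Fin m → HornClause n // HasContradictoryUnits Φ} : ℝ) /
        (Fintype.card (HornClause n) : ℝ) ^ m ≤ c ^ 2 / n := by
  set N := Fintype.card (HornClause n)
  have hN : (n : ℝ) * 2 ^ n ≤ N := by exact_mod_cast HornClause.mul_two_pow_le_card n
  have hNpos : (0 : ℝ) < N := lt_of_lt_of_le (by positivity) hN
  have hcount : (Nat.card {Φ : Fin m → HornClause n // HasContradictoryUnits Φ} : ℝ) * N ^ 2
      ≤ n * m ^ 2 * N ^ m := by exact_mod_cast card_hasContradictoryUnits_mul_le n m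
  calc _ ≤ (n : ℝ) * m ^ 2 / N ^ 2 := by
        rw [div_le_div_iff₀ (by positivity) (by positivity)]
        linarith
    _ ≤ n * (c * 2 ^ n) ^ 2 / (n * 2 ^ n) ^ 2 := by gcongr
    _ = c ^ 2 / n := by field_simp

/-- For every constant `c > 0`, the probability that a random Horn formula
`Φ ∈ Ω(n, ⌊c·2ⁿ⌋)` contains, for some variable `i`, both the positive unit
clause `(some i, ∅)` and the negative unit clause `(none, {i})`, tends to `0`
as `n → ∞` (so PUR does not reject at its first stage w.h.p.). -/
theorem horn_no_contradictory_units (c : ℝ) (hc : 0 < c) :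
    Filter.Tendsto
      (fun n : ℕ =>
        (Nat.card {Φ : Fin ⌊c * 2 ^ n⌋₊ → HornClause n //
            ∃ i : Fin n,
              (∃ j, (Φ j).1 = ((some i, ∅) : HClause n)) ∧
              (∃ j, (Φ j).1 = ((none, {i}) : HClause n))} : ℝ) /
          (Fintype.card (HornClause n) : ℝ) ^ (⌊c * 2 ^ n⌋₊ : ℕ))
      Filter.atTop (nhds 0) := by
  have hbound : ∀ᶠ n : ℕ in atTop,
      (Nat.card {Φ : Fin ⌊c * 2 ^ n⌋₊ → HornClause n // HasContradictoryUnits Φ} : ℝ) /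
          (Fintype.card (HornClause n) : ℝ) ^ ⌊c * 2 ^ n⌋₊ ≤ c ^ 2 / n := by
    filter_upwards [eventually_gt_atTop 0] with n hn
    exact card_hasContradictoryUnits_div_le hn (Nat.floor_le (by positivity))
  exact tendsto_of_tendsto_of_tendsto_of_le_of_le' tendsto_const_nhds
    (tendsto_const_div_atTop_nhds_zero_nat _) (Eventually.of_forall fun n => by positivity) hbound
end

section
/- Let c > 0 be constant and let Φ ∈ Ω(n, ⌊c·2ⁿ⌋) be a random Horn formula. For every fixed k ∈ ℕ, the probability (over both Φ and PUR's random choices) that PUR rejects at one of the stages n, n−1, …, n−k+1 — i.e., halts with output FALSE within its first k iterations — tends to 0 as n → ∞. -/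
open scoped BigOperators

open scoped ENNReal

/-- The variables occurring as positive unit clauses in `Φ`, with multiplicity. -/
def posUnits {n : ℕ} (Φ : List (HClause n)) : List (Fin n) :=
  Φ.filterMap (fun C => if C.2 = ∅ then C.1 else none)

/-- Set the variable `x` to `1`: delete every clause whose positive literal is
`x` and delete the literal `¬x` from every clause containing it. -/
def setTrue {n : ℕ} (x : Fin n) (Φ : List (HClause n)) : List (HClause n) :=
  (Φ.filter (fun C => decide (C.1 ≠ some x))).map (fun C => (C.1, C.2.erase x))

/-- One run of the randomized algorithm PUR with the given amount of fuel
(`fuel = n` always suffices, since each iteration sets a distinct variable):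
if `Φ` has no positive unit clause, halt with TRUE; otherwise pick a positive
unit clause `(x)` uniformly at random; if the negative unit clause `(¬x)` is
in `Φ`, halt with FALSE; else set `x` to 1 and recurse.  The result is the
distribution of the pair (output, number of iterations), each execution of the
else-branch (including the rejecting one) counting as one iteration. -/
noncomputable def purPMF {n : ℕ} : ℕ → List (HClause n) → PMF (Bool × ℕ)
  | 0, _ => PMF.pure (true, 0)
  | (fuel + 1), Φ =>
    if h : posUnits Φ = [] then PMF.pure (true, 0)
    else
      haveI : NeZero (posUnits Φ).length :=
        ⟨fun hl => h (List.length_eq_zero_iff.mp hl)⟩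
      (PMF.uniformOfFintype (Fin (posUnits Φ).length)).bind fun i =>
        let x := (posUnits Φ).get i
        if ((none, {x}) : HClause n) ∈ Φ then PMF.pure (false, 1)
        else (purPMF fuel (setTrue x Φ)).map fun r => (r.1, r.2 + 1)

/-- The list of clauses of a formula `Φ ∈ Ω(n, m)`. -/
def toClauses {n m : ℕ} (Φ : Fin m → HornClause n) : List (HClause n) :=
  (List.ofFn Φ).map Subtype.val

/-- The probability, over both the random choice of `Φ ∈ Ω(n, m)` and the
random choices of PUR, that the (output, iteration count) pair of the run of
PUR on `Φ` lies in `E`. -/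
noncomputable def purProb (n m : ℕ) (E : Set (Bool × ℕ)) : ℝ :=
  ((∑ Φ : Fin m → HornClause n, (purPMF n (toClauses Φ)).toOuterMeasure E) /
    ((Fintype.card (HornClause n) : ℝ≥0∞)) ^ m).toReal

/-!
If some run of PUR on `Φ` rejects within `k` iterations, the variables it set together with the
rejected one form a set `S` with `#S ≤ k` such that `Φ` contains, for every `y ∈ S`, a clause with
head `y` and body inside `S`, and also a negative clause with body inside `S`: these are `#S + 1`
distinct clauses over the variables of `S`. Only `(#S + 1) 2^#S` of the at least `n 2ⁿ` Horn clauses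
live on `S`, so among `m ≤ c 2ⁿ` random clauses this happens with probability at most
`(c (#S + 1) 2^#S / n)^(#S + 1)`. A union bound over the at most `nᵗ` sets of size `t ≤ k` gives
`O(1/n)`.
-/

open Finset

section Counting

variable {α : Type*} [Fintype α] [DecidableEq α]

def hitCount {m : ℕ} (F : Finset α) (Φ : Fin m → α) : ℕ := #{i | Φ i ∈ F}

theorem card_le_hitCount_le (F : Finset α) (m r : ℕ) :
    #{Φ : Fin m → α | r ≤ hitCount F Φ} ≤ m.choose r * (#F ^ r * Fintype.card α ^ (m - r)) := by
  have hcover : ({Φ : Fin m → α | r ≤ hitCount F Φ} : Finset _) ⊆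
      (powersetCard r (univ : Finset (Fin m))).biUnion
        fun T => Fintype.piFinset fun i => if i ∈ T then F else univ := by
    intro Φ hΦ
    obtain ⟨T, hT, hTcard⟩ := exists_subset_card_eq (mem_filter.mp hΦ).2
    refine mem_biUnion.mpr ⟨T, mem_powersetCard.mpr ⟨subset_univ T, hTcard⟩, ?_⟩
    refine Fintype.mem_piFinset.mpr fun i => ?_
    split_ifs with hi
    · exact (mem_filter.mp (hT hi)).2
    · exact mem_univ _
  have hbox : ∀ T ∈ powersetCard r (univ : Finset (Fin m)),
      #(Fintype.piFinset fun i => if i ∈ T then F else univ) =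
        #F ^ r * Fintype.card α ^ (m - r) := by
    intro T hT
    rw [Fintype.card_piFinset, ← (mem_powersetCard.mp hT).2]
    simp only [apply_ite card, card_univ, prod_ite, prod_const]
    rw [filter_not, card_univ_sdiff, Fintype.card_fin]
    simp
  calc _ ≤ _ := card_le_card hcover
    _ ≤ _ := card_biUnion_le
    _ = _ := by rw [sum_congr rfl hbox, sum_const, card_powersetCard, card_univ, Fintype.card_fin,
      smul_eq_mul]

theorem card_le_hitCount_div_le [Nonempty α] (F : Finset α) (m r : ℕ) :
    (#{Φ : Fin m → α | r ≤ hitCount F Φ} : ℝ) / Fintype.card α ^ m ≤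
      (m * #F / Fintype.card α) ^ r := by
  have hcount := card_le_hitCount_le F m r
  rcases lt_or_ge m r with hmr | hrm
  · rw [Nat.choose_eq_zero_of_lt hmr, zero_mul, Nat.le_zero] at hcount
    rw [hcount, Nat.cast_zero, zero_div]
    positivity
  have hN : (0 : ℝ) < Fintype.card α := by exact_mod_cast Fintype.card_pos
  calc (#{Φ : Fin m → α | r ≤ hitCount F Φ} : ℝ) / Fintype.card α ^ m
      ≤ (m.choose r * (#F ^ r * Fintype.card α ^ (m - r)) : ℕ) / Fintype.card α ^ m := by
        gcongr
    _ = m.choose r * (#F / Fintype.card α) ^ r := by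
        obtain ⟨d, rfl⟩ := Nat.exists_eq_add_of_le' hrm
        rw [Nat.add_sub_cancel]
        push_cast
        rw [div_pow, pow_add]
        field_simp
    _ ≤ m ^ r * (#F / Fintype.card α) ^ r := by
        gcongr
        exact_mod_cast Nat.choose_le_pow m r
    _ = (m * #F / Fintype.card α) ^ r := by rw [mul_div_assoc, mul_pow]

end Counting

section PUR

variable {n : ℕ}

def NoRejectWithin : ℕ → List (HClause n) → Prop
  | 0, _ => True
  | k + 1, Ψ =>
    ∀ x ∈ posUnits Ψ, ((none, {x}) : HClause n) ∉ Ψ ∧ NoRejectWithin k (setTrue x Ψ)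

theorem not_reject_of_mem_support_purPMF {fuel k : ℕ} {Ψ : List (HClause n)}
    (h : NoRejectWithin k Ψ) {r : Bool × ℕ} (hr : r ∈ (purPMF fuel Ψ).support) :
    ¬(r.1 = false ∧ r.2 ≤ k) := by
  induction fuel generalizing k Ψ r with
  | zero =>
    rw [purPMF, PMF.support_pure, Set.mem_singleton_iff] at hr
    simp [hr]
  | succ fuel ih =>
    rw [purPMF] at hr
    split_ifs at hr with hnil
    · rw [PMF.support_pure, Set.mem_singleton_iff] at hr
      simp [hr]
    obtain ⟨i, -, hi⟩ := (PMF.mem_support_bind_iff _ _ _).mp hr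
    have hx := List.get_mem (posUnits Ψ) i
    rintro ⟨hfalse, hk⟩
    dsimp only at hi
    split_ifs at hi with hneg
    · rw [PMF.support_pure, Set.mem_singleton_iff] at hi
      subst hi
      obtain ⟨k, rfl⟩ := Nat.exists_eq_add_of_le' hk
      exact (h _ hx).1 hneg
    · obtain ⟨r', hr', rfl⟩ := (PMF.support_map _ _ ▸ hi : _)
      obtain ⟨k, rfl⟩ := Nat.exists_eq_add_of_le' (le_of_add_le_right hk)
      exact ih (h _ hx).2 hr' ⟨hfalse, by simpa using hk⟩

theorem purProb_reject_le_card_div {m k : ℕ} (bad : Finset (Fin m → HornClause n))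
    (hbad : ∀ Φ, ¬NoRejectWithin k (toClauses Φ) → Φ ∈ bad) :
    purProb n m {r | r.1 = false ∧ r.2 ≤ k} ≤ #bad / (Fintype.card (HornClause n) : ℝ) ^ m := by
  set E : Set (Bool × ℕ) := {r | r.1 = false ∧ r.2 ≤ k}
  have hzero : ∀ Φ ∉ bad, (purPMF n (toClauses Φ)).toOuterMeasure E = 0 := fun Φ hΦ =>
    (PMF.toOuterMeasure_apply_eq_zero_iff _ _).mpr <| Set.disjoint_left.mpr fun _ hr =>
      not_reject_of_mem_support_purPMF (not_not.mp (mt (hbad Φ) hΦ)) hr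
  have hsum : ∑ Φ, (purPMF n (toClauses Φ)).toOuterMeasure E ≤ #bad :=
    calc ∑ Φ, (purPMF n (toClauses Φ)).toOuterMeasure E
        = ∑ Φ ∈ bad, (purPMF n (toClauses Φ)).toOuterMeasure E :=
          (sum_subset (subset_univ bad) fun Φ _ hΦ => hzero Φ hΦ).symm
      _ ≤ ∑ _Φ ∈ bad, 1 := sum_le_sum fun Φ _ =>
          (PMF.toOuterMeasure_apply_le_toMeasure_apply _ E).trans MeasureTheory.prob_le_one
      _ = #bad := by simp
  rw [purProb, ENNReal.toReal_div, ENNReal.toReal_pow, ENNReal.toReal_natCast]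
  gcongr
  simpa using ENNReal.toReal_mono (ENNReal.natCast_ne_top _) hsum

theorem mem_posUnits {Ψ : List (HClause n)} {x : Fin n} :
    x ∈ posUnits Ψ ↔ ((some x, ∅) : HClause n) ∈ Ψ := by
  simp [posUnits, List.mem_filterMap]

theorem mem_setTrue {Ψ : List (HClause n)} {x : Fin n} {C : HClause n} :
    C ∈ setTrue x Ψ ↔ ∃ C' ∈ Ψ, C'.1 ≠ some x ∧ (C'.1, C'.2.erase x) = C := by
  simp [setTrue, and_assoc]

def CoversHeadsWithin (L : List (HClause n)) (S : Finset (Fin n)) : Prop :=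
  ∀ h ∈ S.insertNone, ∃ B ⊆ S, (h, B) ∈ L

theorem exists_coversHeadsWithin_of_not_noRejectWithin {L : List (HClause n)} (k : ℕ) :
    ∀ {A : Finset (Fin n)} {Ψ : List (HClause n)},
      (∀ C ∈ Ψ, ∃ C₀ ∈ L, C = (C₀.1, C₀.2 \ A)) →
      (∀ a ∈ A, ∃ B ⊆ A, (some a, B) ∈ L) →
      ¬NoRejectWithin k Ψ → ∃ S, #S ≤ #A + k ∧ CoversHeadsWithin L S := by
  induction k with
  | zero => exact fun _ _ h => absurd trivial h
  | succ k ih =>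
    intro A Ψ hΨ hA h
    simp only [NoRejectWithin, not_forall, not_and_or, not_not] at h
    obtain ⟨x, hx, hstep⟩ := h
    have hA' : ∀ a ∈ insert x A, ∃ B ⊆ insert x A, (some a, B) ∈ L := by
      obtain ⟨⟨_, B₀⟩, hB₀L, hC⟩ := hΨ _ (mem_posUnits.mp hx)
      obtain ⟨rfl, hB₀⟩ := Prod.mk.inj hC
      intro a ha
      rcases mem_insert.mp ha with rfl | ha
      · exact ⟨B₀, (sdiff_eq_empty_iff_subset.mp hB₀.symm).trans (subset_insert _ _), hB₀L⟩
      · obtain ⟨B, hB, hBL⟩ := hA a ha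
        exact ⟨B, hB.trans (subset_insert _ _), hBL⟩
    have hcard : #(insert x A) ≤ #A + 1 := card_insert_le x A
    rcases hstep with hreject | hrecurse
    · obtain ⟨⟨_, D₀⟩, hD₀L, hD⟩ := hΨ _ hreject
      obtain ⟨rfl, hD₀⟩ := Prod.mk.inj hD
      refine ⟨insert x A, by omega, fun h hh => ?_⟩
      cases h with
      | none =>
        refine ⟨D₀, ?_, hD₀L⟩
        rw [insert_eq]
        exact sdiff_le_iff'.mp hD₀.ge
      | some a => exact hA' a (mem_insertNone.mp hh a rfl)
    · refine (ih ?_ hA' hrecurse).imp fun S hS => ⟨by omega, hS.2⟩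
      intro C hC
      obtain ⟨C', hC', -, rfl⟩ := mem_setTrue.mp hC
      obtain ⟨C₀, hC₀, rfl⟩ := hΨ C' hC'
      exact ⟨C₀, hC₀, by rw [sdiff_insert]⟩

end PUR

section Footprint

variable {n : ℕ}

def clausesWithin (S : Finset (Fin n)) : Finset (HornClause n) :=
  {C | C.1.1 ∈ S.insertNone ∧ C.1.2 ⊆ S}

theorem card_clausesWithin_le (S : Finset (Fin n)) :
    #(clausesWithin S) ≤ (#S + 1) * 2 ^ #S :=
  calc #(clausesWithin S) ≤ #(S.insertNone ×ˢ S.powerset) :=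
        card_le_card_of_injOn Subtype.val
          (fun C hC => by simpa [clausesWithin] using hC) Subtype.val_injective.injOn
    _ = (#S + 1) * 2 ^ #S := by rw [card_product, card_insertNone, card_powerset]

theorem card_add_one_le_hitCount {m : ℕ} {Φ : Fin m → HornClause n} {S : Finset (Fin n)}
    (h : CoversHeadsWithin (toClauses Φ) S) : #S + 1 ≤ hitCount (clausesWithin S) Φ := by
  rw [← card_insertNone, hitCount]
  refine card_le_card_of_surjOn (fun i => (Φ i).1.1) fun o ho => ?_
  obtain ⟨B, hB, hmem⟩ := h o ho
  obtain ⟨i, hi⟩ : ∃ i, (Φ i).1 = (o, B) := by simpa [toClauses, List.mem_ofFn] using hmem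
  exact ⟨i, by simpa [clausesWithin, hi, hB] using ho, by simp [hi]⟩

end Footprint

theorem purProb_reject_le_sum {n : ℕ} (hn : 0 < n) (m k : ℕ) :
    purProb n m {r | r.1 = false ∧ r.2 ≤ k} ≤
      ∑ t ∈ range (k + 1), (n.choose t : ℝ) *
        (m * ((t + 1) * 2 ^ t) / Fintype.card (HornClause n)) ^ (t + 1) := by
  have : Nonempty (HornClause n) := ⟨⟨(some ⟨0, hn⟩, ∅), by simp⟩⟩
  set N := Fintype.card (HornClause n)
  let bad : Finset (Fin m → HornClause n) := (range (k + 1)).biUnion fun t =>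
    (powersetCard t univ).biUnion fun S => {Φ | t + 1 ≤ hitCount (clausesWithin S) Φ}
  have hbad : ∀ Φ, ¬NoRejectWithin k (toClauses Φ) → Φ ∈ bad := by
    intro Φ hΦ
    obtain ⟨S, hS, hcover⟩ := exists_coversHeadsWithin_of_not_noRejectWithin k (A := ∅)
      (fun C hC => ⟨C, hC, by simp⟩) (by simp) hΦ
    simp only [bad, mem_biUnion, mem_powersetCard, mem_filter, mem_range]
    exact ⟨#S, by simpa [Nat.lt_succ_iff] using hS, S, ⟨subset_univ S, rfl⟩, mem_univ Φ,
      card_add_one_le_hitCount hcover⟩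
  calc purProb n m {r | r.1 = false ∧ r.2 ≤ k}
      ≤ (#bad : ℝ) / N ^ m := purProb_reject_le_card_div bad hbad
    _ ≤ ∑ t ∈ range (k + 1), ∑ S ∈ powersetCard t univ,
          (#{Φ : Fin m → HornClause n | t + 1 ≤ hitCount (clausesWithin S) Φ} : ℝ) / N ^ m := by
        simp only [← sum_div]
        gcongr
        exact_mod_cast card_biUnion_le.trans (sum_le_sum fun t _ => card_biUnion_le)
    _ ≤ ∑ t ∈ range (k + 1), ∑ S ∈ powersetCard t (univ : Finset (Fin n)),
          ((m * ((t + 1) * 2 ^ t) / N) : ℝ) ^ (t + 1) := by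
        gcongr with t _ S hS
        refine (card_le_hitCount_div_le _ m (t + 1)).trans ?_
        rw [← (mem_powersetCard.mp hS).2]
        gcongr
        exact_mod_cast card_clausesWithin_le S
    _ = ∑ t ∈ range (k + 1), (n.choose t : ℝ) * (m * ((t + 1) * 2 ^ t) / N) ^ (t + 1) := by
        simp [sum_const, card_powersetCard]

theorem mul_two_pow_le_card_hornClause (n : ℕ) : n * 2 ^ n ≤ Fintype.card (HornClause n) := by
  have hinj : Function.Injective fun p : Fin n × Finset (Fin n) =>
      (⟨(some p.1, p.2), by simp⟩ : HornClause n) := by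
    intro p q h
    simpa [Prod.ext_iff] using h
  simpa [Fintype.card_finset] using Fintype.card_le_of_injective _ hinj

theorem floor_div_card_hornClause_le {c : ℝ} (hc : 0 ≤ c) {n : ℕ} (hn : 0 < n) :
    (⌊c * 2 ^ n⌋₊ : ℝ) / Fintype.card (HornClause n) ≤ c / n :=
  calc (⌊c * 2 ^ n⌋₊ : ℝ) / Fintype.card (HornClause n) ≤ c * 2 ^ n / (n * 2 ^ n) :=
        div_le_div₀ (by positivity) (Nat.floor_le (by positivity)) (by positivity)
          (by exact_mod_cast mul_two_pow_le_card_hornClause n)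
    _ = c / n := by field_simp

theorem choose_mul_pow_le_div {n : ℕ} (hn : 0 < n) (t : ℕ) {c x a : ℝ} (hx₀ : 0 ≤ x)
    (hx : x ≤ c / n) (ha : 0 ≤ a) :
    (n.choose t : ℝ) * (x * a) ^ (t + 1) ≤ (c * a) ^ (t + 1) / n :=
  calc (n.choose t : ℝ) * (x * a) ^ (t + 1) ≤ n ^ t * (c / n * a) ^ (t + 1) := by
        gcongr
        exact_mod_cast Nat.choose_le_pow n t
    _ = (c * a) ^ (t + 1) / n := by
        have : (n : ℝ) ≠ 0 := by positivity
        rw [div_mul_eq_mul_div, div_pow, pow_succ (n : ℝ)]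
        field_simp

/-- Let `c > 0`.  For every fixed `k`, the probability (over both
`Φ ∈ Ω(n, ⌊c·2ⁿ⌋)` and PUR's random choices) that PUR rejects within its first
`k` iterations — i.e. halts with output FALSE with iteration count at most `k`
(rejecting at one of the stages `n, n-1, …, n-k+1`) — tends to `0`. -/
theorem pur_no_early_reject (c : ℝ) (hc : 0 < c) (k : ℕ) :
    Filter.Tendsto
      (fun n : ℕ =>
        purProb n ⌊c * 2 ^ n⌋₊ {x : Bool × ℕ | x.1 = false ∧ x.2 ≤ k})
      Filter.atTop (nhds 0) := by
  set K := ∑ t ∈ range (k + 1), (c * ((t + 1) * 2 ^ t)) ^ (t + 1)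
  refine squeeze_zero' (.of_forall fun n => ENNReal.toReal_nonneg) ?_
    (tendsto_const_div_atTop_nhds_zero_nat K)
  filter_upwards [Filter.eventually_gt_atTop 0] with n hn
  calc _ ≤ _ := purProb_reject_le_sum hn _ k
    _ ≤ ∑ t ∈ range (k + 1), (c * ((t + 1) * 2 ^ t)) ^ (t + 1) / n := sum_le_sum fun t _ => by
        rw [mul_div_right_comm]
        exact choose_mul_pow_le_div hn t (by positivity) (floor_div_card_hornClause_le hc.le hn)
          (by positivity)
    _ = K / n := (sum_div _ _ _).symm
end
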